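/- Let M be a connected simple matroid of rank 3 on a finite ground set E with rank function r. Suppose A is a flat of M with r(A) = 2, |E \ A| ≥ 3, and x ∈ E is an element with x ∉ A that belongs to no facet-defining flat F of rank 2 of M satisfying F ∩ A ≠ ∅. Then M is 2-decomposable by the hyperplane (A ∪ {x}, 2)_=. -/

import Mathlib

open Set Matroid

namespace PaperWMO

variable {α : Type*}

/-- The rank of a set `X` in a matroid `M`: the size of a largest independent subset of `X`. -/
noncomputable def rk (M : Matroid α) (X : Set α) : ℕ :=
  sSup {n : ℕ | ∃ I, M.Indep I ∧ I ⊆ X ∧ I.ncard = n}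

/-- Contraction of the set `C` in the matroid `M`, defined by duality:
`M / C = (M✶ \ C)✶`, where deletion is restriction to the complement. -/
noncomputable def contract (M : Matroid α) (C : Set α) : Matroid α :=
  (M✶ ↾ (M.E \ C))✶

/-- A matroid is connected if its ground set is nonempty and it is not the direct sum of
two matroids on nonempty disjoint ground sets. -/
def Conn (M : Matroid α) : Prop :=
  M.E.Nonempty ∧ ¬ ∃ (M₁ M₂ : Matroid α) (h : Disjoint M₁.E M₂.E),
    M₁.E.Nonempty ∧ M₂.E.Nonempty ∧ M = Matroid.disjointSum M₁ M₂ h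

/-- A flat of `M`: a subset `F` of the ground set such that any superset
`B` with `F ⊆ B ⊆ M.E` of the same rank equals `F`. -/
def IsFlat (M : Matroid α) (F : Set α) : Prop :=
  F ⊆ M.E ∧ ∀ B : Set α, F ⊆ B → B ⊆ M.E → rk M B = rk M F → B = F

/-- A matroid is simple if every subset of the ground set with at most two elements
is independent. -/
def IsSimple (M : Matroid α) : Prop :=
  ∀ X ⊆ M.E, X.ncard ≤ 2 → M.Indep X

/-- A facet-defining flat of rank 2: a flat `F` of rank 2 such that
both the restriction `M ↾ F` and the contraction `M / F` are connected. -/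
def FacetFlat2 (M : Matroid α) (F : Set α) : Prop :=
  IsFlat M F ∧ rk M F = 2 ∧ Conn (M ↾ F) ∧ Conn (contract M F)

/-- `M` is 2-decomposable by the hyperplane `(A, a)_=`. -/
def TwoDecomposableBy (M : Matroid α) (A : Set α) (a : ℕ) : Prop :=
  (∃ N₁ : Matroid α, N₁.E = M.E ∧
      ∀ B : Set α, N₁.IsBase B ↔ M.IsBase B ∧ (B ∩ A).ncard ≤ a) ∧
  (∃ N₂ : Matroid α, N₂.E = M.E ∧
      ∀ B : Set α, N₂.IsBase B ↔ M.IsBase B ∧ a ≤ (B ∩ A).ncard) ∧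
  (∃ B : Set α, M.IsBase B ∧ a < (B ∩ A).ncard) ∧
  (∃ B : Set α, M.IsBase B ∧ (B ∩ A).ncard < a)

/-- A 3-partition in `M`: a partition of the ground set into three parts, each of size
at least two, such that no facet-defining flat of rank 2 meets all three parts, and the
union of any two parts has rank 3. -/
def ThreePartition (M : Matroid α) (A₁ A₂ A₃ : Set α) : Prop :=
  A₁ ∪ A₂ ∪ A₃ = M.E ∧
  Disjoint A₁ A₂ ∧ Disjoint A₂ A₃ ∧ Disjoint A₁ A₃ ∧
  2 ≤ A₁.ncard ∧ 2 ≤ A₂.ncard ∧ 2 ≤ A₃.ncard ∧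
  (¬ ∃ F : Set α, FacetFlat2 M F ∧
      (F ∩ A₁).Nonempty ∧ (F ∩ A₂).Nonempty ∧ (F ∩ A₃).Nonempty) ∧
  rk M (A₁ ∪ A₂) = 3 ∧ rk M (A₂ ∪ A₃) = 3 ∧ rk M (A₃ ∪ A₁) = 3

/-- The adjacency relation of the graph `g(A, B)` (with respect to the matroid `M`):
the vertex set is `B`, and distinct `x, y ∈ B` are adjacent iff some facet-defining flat
of rank 2 of `M` contains both `x` and `y` and meets `A`. -/
def gAdj (M : Matroid α) (A B : Set α) (x y : α) : Prop :=
  x ∈ B ∧ y ∈ B ∧ x ≠ y ∧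
    ∃ F : Set α, FacetFlat2 M F ∧ x ∈ F ∧ y ∈ F ∧ (F ∩ A).Nonempty

/-- `C` is the vertex set of a connected component of the graph `g(S, V)`. -/
def IsGComponent (M : Matroid α) (S V C : Set α) : Prop :=
  ∃ x ∈ V, C = {y | y ∈ V ∧ Relation.ReflTransGen (gAdj M S V) x y}

/-!
A line through `x` and a point of `A` cannot carry a third point: it would be a rank-2 flat whose
restriction is connected (any three of its points form a circuit) and whose contraction is a
loopless matroid of rank one, hence a facet-defining flat meeting `A` and containing `x`.
Consequently every three-element set meeting `A ∪ {x}` in exactly two points is a base, since two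
points of `A` span only `A`, and `x` with a point of `A` span only themselves.

For a matroid of finite rank, this property alone lets the bases meeting a set `S` in at most `a`
points satisfy the exchange axiom: when the exchange in `M` would push the count above `a`, counting
provides a partner outside `S`, and the resulting set is a base because it meets `S` in exactly
`a` points. Bases meeting `S` in at least `a` points are handled through the complement of `S`.
-/

section BaseCount

variable {M : Matroid α} [M.RankFinite] {S : Set α} {a : ℕ}

lemma exchangeProperty_isBase_ncard_inter_le
    (hS : ∀ T ⊆ M.E, T.encard = M.eRank → (T ∩ S).ncard = a → M.IsBase T) :
    ExchangeProperty (fun B ↦ M.IsBase B ∧ (B ∩ S).ncard ≤ a) := by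
  rintro B₁ B₂ ⟨hB₁, h₁⟩ ⟨hB₂, h₂⟩ e he
  have hB₁fin := hB₁.finite
  by_cases hcase : e ∈ S ∨ (B₁ ∩ S).ncard < a
  · obtain ⟨f, hf, hB⟩ := hB₁.exchange hB₂ he
    refine ⟨f, hf, hB, ?_⟩
    have hsub : insert f (B₁ \ {e}) ∩ S ⊆ insert f ((B₁ \ {e}) ∩ S) := by
      rw [insert_inter_distrib]; exact inter_subset_inter_right _ (subset_insert f S)
    have hle : (insert f (B₁ \ {e}) ∩ S).ncard ≤ ((B₁ \ {e}) ∩ S).ncard + 1 :=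
      (ncard_le_ncard hsub (hB₁fin.sdiff.inter_of_left S |>.insert f)).trans (ncard_insert_le _ _)
    rcases hcase with heS | hlt
    · have : ((B₁ \ {e}) ∩ S).ncard + 1 = (B₁ ∩ S).ncard := by
        rw [sdiff_inter_right_comm, ncard_sdiff_singleton_add_one (show e ∈ B₁ ∩ S from ⟨he.1, heS⟩)
          (hB₁fin.inter_of_left S)]
      omega
    · have : ((B₁ \ {e}) ∩ S).ncard ≤ (B₁ ∩ S).ncard :=
        ncard_le_ncard (inter_subset_inter_left S sdiff_subset) (hB₁fin.inter_of_left S)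
      omega
  push Not at hcase
  obtain ⟨heS, hlt⟩ := hcase
  -- `B₁` meets `S` in exactly `a` elements, so the partner of `e` must be taken outside `S`
  have hcount : ((B₁ \ S) \ {e}).ncard < (B₂ \ S).ncard := by
    have h₁ := ncard_inter_add_ncard_sdiff_eq_ncard B₁ S hB₁fin
    have h₂ := ncard_inter_add_ncard_sdiff_eq_ncard B₂ S hB₂.finite
    have := hB₁.ncard_eq_ncard_of_isBase hB₂
    have heBS : e ∈ B₁ \ S := ⟨he.1, heS⟩
    have := (nonempty_of_mem heBS).ncard_pos hB₁fin.sdiff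
    rw [ncard_sdiff_singleton_of_mem heBS]
    omega
  obtain ⟨f, ⟨hfB₂, hfS⟩, hf⟩ := exists_mem_notMem_of_ncard_lt_ncard hcount hB₁fin.sdiff.sdiff
  have hfB₁ : f ∉ B₁ := fun hfB₁ ↦ hf ⟨⟨hfB₁, hfS⟩, fun hfe ↦ he.2 (hfe ▸ hfB₂)⟩
  have hfe : f ∉ B₁ \ {e} := fun h ↦ hfB₁ h.1
  have hT : (insert f (B₁ \ {e}) ∩ S) = B₁ ∩ S := by
    rw [insert_inter_of_notMem hfS, sdiff_inter_right_comm,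
      sdiff_singleton_eq_self fun h ↦ heS h.2]
  refine ⟨f, ⟨hfB₂, hfB₁⟩, hS _ (insert_subset (hB₂.subset_ground hfB₂)
    (sdiff_subset.trans hB₁.subset_ground)) ?_ (by rw [hT]; omega), by rw [hT]; omega⟩
  rw [encard_insert_of_notMem hfe, encard_sdiff_singleton_add_one he.1, hB₁.encard_eq_eRank]

lemma exists_matroid_isBase_iff_ncard_inter_le
    (hS : ∀ T ⊆ M.E, T.encard = M.eRank → (T ∩ S).ncard = a → M.IsBase T)
    (hB : ∃ B, M.IsBase B ∧ (B ∩ S).ncard ≤ a) :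
    ∃ N : Matroid α, N.E = M.E ∧ ∀ B, N.IsBase B ↔ M.IsBase B ∧ (B ∩ S).ncard ≤ a := by
  obtain ⟨B, hB, hBS⟩ := hB
  exact ⟨Matroid.ofExistsFiniteIsBase M.E _ ⟨B, ⟨hB, hBS⟩, hB.finite⟩
    (exchangeProperty_isBase_ncard_inter_le hS) (fun _ h ↦ h.1.subset_ground), rfl,
    fun _ ↦ Iff.rfl⟩

lemma exists_matroid_isBase_iff_le_ncard_inter
    (hS : ∀ T ⊆ M.E, T.encard = M.eRank → (T ∩ S).ncard = a → M.IsBase T)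
    (hB : ∃ B, M.IsBase B ∧ a ≤ (B ∩ S).ncard) :
    ∃ N : Matroid α, N.E = M.E ∧ ∀ B, N.IsBase B ↔ M.IsBase B ∧ a ≤ (B ∩ S).ncard := by
  obtain ⟨B₀, hB₀, hB₀S⟩ := hB
  have hsplit : ∀ T ⊆ M.E, T.Finite → (T ∩ (M.E \ S)).ncard + (T ∩ S).ncard = T.ncard := by
    intro T hT hTfin
    rw [← inter_sdiff_assoc, inter_eq_self_of_subset_left hT, add_comm]
    exact ncard_inter_add_ncard_sdiff_eq_ncard T S hTfin
  have hcard : ∀ T : Set α, T.encard = M.eRank → T.Finite ∧ T.ncard = B₀.ncard := by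
    intro T hT
    rw [← hB₀.encard_eq_eRank] at hT
    exact ⟨encard_ne_top_iff.1 (hT ▸ encard_ne_top_iff.2 hB₀.finite),
      by rw [ncard_def, ncard_def, hT]⟩
  have hB₀le : (B₀ ∩ S).ncard ≤ B₀.ncard := ncard_le_ncard inter_subset_left hB₀.finite
  have hS' : ∀ T ⊆ M.E, T.encard = M.eRank → (T ∩ (M.E \ S)).ncard = B₀.ncard - a →
      M.IsBase T := by
    intro T hTE hT hTS
    obtain ⟨hTfin, hTcard⟩ := hcard T hT
    have := hsplit T hTE hTfin
    exact hS T hTE hT (by omega)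
  have hB₀' : (B₀ ∩ (M.E \ S)).ncard ≤ B₀.ncard - a := by
    have := hsplit B₀ hB₀.subset_ground hB₀.finite
    omega
  obtain ⟨N, hNE, hN⟩ := exists_matroid_isBase_iff_ncard_inter_le hS' ⟨B₀, hB₀, hB₀'⟩
  refine ⟨N, hNE, fun B ↦ (hN B).trans (and_congr_right fun hB ↦ ?_)⟩
  have := hsplit B hB.subset_ground hB.finite
  have := (hcard B hB.encard_eq_eRank).2
  omega

end BaseCount

lemma cast_rk_eq_eRk (M : Matroid α) [M.RankFinite] (X : Set α) : (rk M X : ℕ∞) = M.eRk X := by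
  obtain ⟨I, hI⟩ := M.exists_isBasis' X
  have hIfin := hI.indep.finite
  have hgreatest : IsGreatest {n : ℕ | ∃ J, M.Indep J ∧ J ⊆ X ∧ J.ncard = n} I.ncard := by
    refine ⟨⟨I, hI.indep, hI.subset, rfl⟩, ?_⟩
    rintro _ ⟨J, hJ, hJX, rfl⟩
    have := hJ.encard_le_eRk_of_subset hJX
    rw [← hI.encard_eq_eRk, ← hJ.finite.cast_ncard_eq, ← hIfin.cast_ncard_eq] at this
    exact_mod_cast this
  rw [rk, hgreatest.csSup_eq, hIfin.cast_ncard_eq, hI.encard_eq_eRk]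

lemma isFlat_iff_isFlat {M : Matroid α} [M.RankFinite] {F : Set α} :
    IsFlat M F ↔ M.IsFlat F := by
  rw [isFlat_iff_closure_eq]
  refine ⟨fun h ↦ h.2 _ (M.subset_closure F h.1) (M.closure_subset_ground F) ?_,
    fun h ↦ ⟨h ▸ M.closure_subset_ground F, fun B hFB hBE hr ↦ ?_⟩⟩
  · exact_mod_cast (cast_rk_eq_eRk ..).trans ((M.eRk_closure_eq F).trans (cast_rk_eq_eRk ..).symm)
  · have hcl := (M.isRkFinite_set F).closure_eq_closure_of_subset_of_eRk_ge_eRk hFB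
      (by rw [← cast_rk_eq_eRk, ← cast_rk_eq_eRk, hr])
    rw [h] at hcl
    exact (M.subset_closure B hBE).trans hcl.ge |>.antisymm hFB

lemma IsSimple.indep_pair {M : Matroid α} (h : IsSimple M) {a b : α} (ha : a ∈ M.E)
    (hb : b ∈ M.E) : M.Indep {a, b} :=
  h _ (pair_subset ha hb) ((ncard_insert_le a {b}).trans (by rw [ncard_singleton]))

lemma conn_of_forall_exists_isCircuit {N : Matroid α} (hne : N.E.Nonempty)
    (h : ∀ e ∈ N.E, ∀ f ∈ N.E, e ≠ f → ∃ C, N.IsCircuit C ∧ e ∈ C ∧ f ∈ C) : Conn N := by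
  refine ⟨hne, ?_⟩
  rintro ⟨N₁, N₂, hdj, ⟨e, he⟩, ⟨f, hf⟩, rfl⟩
  obtain ⟨C, hC, heC, hfC⟩ := h e (by simp [he]) f (by simp [hf]) (hdj.ne_of_mem he hf)
  have h₁ := (disjointSum_indep_iff.1 (hC.sdiff_singleton_indep hfC)).1
  have h₂ := (disjointSum_indep_iff.1 (hC.sdiff_singleton_indep heC)).2.1
  rw [sdiff_inter_right_comm, sdiff_singleton_eq_self (fun h ↦ hdj.ne_of_mem h.2 hf rfl)] at h₁
  rw [sdiff_inter_right_comm, sdiff_singleton_eq_self (fun h ↦ hdj.ne_of_mem he h.2 rfl)] at h₂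
  exact hC.not_indep (disjointSum_indep_iff.2 ⟨h₁, h₂, by simpa using hC.subset_ground⟩)

lemma conn_restrict_of_eRk_le_two {M : Matroid α} {F : Set α} (hsimple : IsSimple M)
    (hFE : F ⊆ M.E) (hF : M.eRk F ≤ 2) (h3 : 3 ≤ F.encard) : Conn (M ↾ F) := by
  have hne : F.Nonempty := nonempty_of_encard_ne_zero (by rintro h; simp [h] at h3)
  refine conn_of_forall_exists_isCircuit hne fun p hp q hq hpq ↦ ?_
  obtain ⟨r, hrF, hr⟩ : ∃ r ∈ F, r ∉ ({p, q} : Set α) := by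
    by_contra! h
    have := (encard_le_encard h).trans_eq (encard_pair hpq)
    exact absurd (h3.trans this) (by norm_num)
  have hsub : ({r, p, q} : Set α) ⊆ F := insert_subset hrF (pair_subset hp hq)
  have hcard : ({r, p, q} : Set α).ncard = 3 := by
    rw [ncard_insert_of_notMem hr, ncard_pair hpq]
  refine ⟨{r, p, q}, ?_, by simp, by simp⟩
  rw [restrict_isCircuit_iff hFE, isCircuit_iff_dep_forall_sdiff_singleton_indep]
  refine ⟨⟨⟨fun hind ↦ ?_, hsub.trans hFE⟩, fun e he ↦ ?_⟩, hsub⟩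
  · have := (hind.encard_le_eRk_of_subset hsub).trans hF
    rw [encard_insert_of_notMem hr, encard_pair hpq] at this
    exact absurd this (by norm_num)
  · exact hsimple _ (sdiff_subset.trans (hsub.trans hFE))
      (by rw [ncard_sdiff_singleton_of_mem he, hcard])

section RankThree

variable {M : Matroid α} [M.RankFinite] {A F I S T : Set α} {a x : α}

lemma conn_contract_closure (hI : M.Indep I) (hrank : I.encard + 1 = M.eRank) :
    Conn (M ／ M.closure I) := by
  have hIfin := hI.finite
  rw [← hIfin.cast_ncard_eq] at hrank
  have hbasis := hI.isBasis_closure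
  have hne : (M.E \ M.closure I).Nonempty := by
    rw [nonempty_iff_ne_empty, Ne, sdiff_eq_empty]
    intro hsp
    have := (hI.isBase_of_ground_subset_closure hsp).encard_eq_eRank
    rw [← hrank, ← hIfin.cast_ncard_eq] at this
    norm_cast at this
    omega
  have hsingle : ∀ e ∈ M.E \ M.closure I, (M ／ M.closure I).Indep {e} := fun e he ↦ by
    rw [hbasis.contract_indep_iff, singleton_union, hI.insert_indep_iff_of_notMem
      (fun heI ↦ he.2 (M.subset_closure I hI.subset_ground heI))]
    exact ⟨he, disjoint_singleton_right.2 he.2⟩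
  refine conn_of_forall_exists_isCircuit hne fun p hp q hq hpq ↦ ⟨{p, q}, ?_, by simp, by simp⟩
  rw [isCircuit_iff_dep_forall_sdiff_singleton_indep, hbasis.contract_dep_iff]
  refine ⟨⟨⟨fun hind ↦ ?_, union_subset (pair_subset hp.1 hq.1) hI.subset_ground⟩,
    disjoint_left.2 ?_⟩, ?_⟩
  · have hdj : Disjoint ({p, q} : Set α) I := by
      refine disjoint_left.2 ?_
      rintro _ (rfl | rfl) h
      exacts [hp.2 (M.subset_closure I hI.subset_ground h),
        hq.2 (M.subset_closure I hI.subset_ground h)]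
    have := hind.encard_le_eRank
    rw [encard_union_eq hdj, encard_pair hpq, ← hrank, ← hIfin.cast_ncard_eq] at this
    norm_cast at this
    omega
  · rintro e he (rfl | rfl)
    exacts [hp.2 he, hq.2 he]
  · rintro _ (rfl | rfl)
    · rw [pair_sdiff_left hpq]; exact hsingle q hq
    · rw [pair_sdiff_right hpq]; exact hsingle p hp

lemma facetFlat2_of_isFlat (hsimple : IsSimple M) (hrank : M.eRank = 3) (hF : M.IsFlat F)
    (hF2 : M.eRk F = 2) (h3 : 3 ≤ F.encard) : FacetFlat2 M F := by
  obtain ⟨I, hI⟩ := M.exists_isBasis F hF.subset_ground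
  have hFI : F = M.closure I := by rw [hI.closure_eq_closure, hF.closure]
  refine ⟨isFlat_iff_isFlat.2 hF, by exact_mod_cast (cast_rk_eq_eRk M F).trans hF2,
    conn_restrict_of_eRk_le_two hsimple hF.subset_ground hF2.le h3, ?_⟩
  rw [contract, hFI]
  exact conn_contract_closure hI.indep (by rw [hI.encard_eq_eRk, hF2, hrank]; rfl)

lemma isBase_of_indep_of_encard_eq (hI : M.Indep I) (hIr : I.encard = M.eRank) :
    M.IsBase I :=
  hI.isBase_of_eRk_ge hI.finite (by rw [hI.eRk_eq_encard, hIr])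

lemma ncard_eq_three_of_isBase (hrank : M.eRank = 3) {B : Set α} (hB : M.IsBase B) :
    B.ncard = 3 := by
  rw [← Nat.cast_inj (R := ℕ∞), hB.finite.cast_ncard_eq, hB.encard_eq_eRank, hrank]; rfl

lemma closure_pair_eq_self (hsimple : IsSimple M) (hrank : M.eRank = 3) (haA : a ∈ A)
    (haE : a ∈ M.E) (hxE : x ∈ M.E) (hxA : x ∉ A)
    (hx : ∀ F, FacetFlat2 M F → (F ∩ A).Nonempty → x ∉ F) : M.closure {a, x} = {a, x} := by
  have hax : a ≠ x := fun h ↦ hxA (h ▸ haA)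
  have hI := hsimple.indep_pair haE hxE
  refine (M.subset_closure _ (pair_subset haE hxE)).antisymm' fun e he ↦ ?_
  by_contra hne
  have h3 : 3 ≤ (M.closure {a, x}).encard := by
    have := encard_le_encard (insert_subset he (M.subset_closure _ (pair_subset haE hxE)))
    rwa [encard_insert_of_notMem hne, encard_pair hax] at this
  have hF := facetFlat2_of_isFlat hsimple hrank (M.isFlat_closure {a, x})
    (by rw [eRk_closure_eq, hI.eRk_eq_encard, encard_pair hax]) h3
  exact hx _ hF ⟨a, M.mem_closure_of_mem (by simp), haA⟩ (M.mem_closure_of_mem (by simp))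

lemma isBase_of_notMem_closure_pair (hsimple : IsSimple M) (hrank : M.eRank = 3)
    (hTE : T ⊆ M.E) (hT : T.encard = 3) {b c r : α} (hbc : b ≠ c) (hb : b ∈ T) (hc : c ∈ T)
    (hr : r ∈ T) (hrbc : r ∉ M.closure {b, c}) : M.IsBase T := by
  have hpair := hsimple.indep_pair (hTE hb) (hTE hc)
  have hrbc' : r ∉ ({b, c} : Set α) := fun h ↦ hrbc (M.subset_closure _ hpair.subset_ground h)
  have hsub : ({r, b, c} : Set α) ⊆ T := insert_subset hr (pair_subset hb hc)
  have hcard : ({r, b, c} : Set α).encard = 3 := by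
    rw [encard_insert_of_notMem hrbc', encard_pair hbc]; rfl
  have hind : M.Indep {r, b, c} :=
    (hpair.insert_indep_iff_of_notMem hrbc').2 ⟨hTE hr, hrbc⟩
  rw [← (finite_of_encard_eq_coe hT).eq_of_subset_of_encard_le' hsub (by rw [hT, hcard])]
  exact isBase_of_indep_of_encard_eq hind (hcard.trans hrank.symm)

lemma isBase_of_ncard_inter_eq_two (hsimple : IsSimple M) (hrank : M.eRank = 3)
    (hA : M.closure A = A) (hxA : x ∉ A) (hline : ∀ a ∈ A, M.closure {a, x} = {a, x})
    (hTE : T ⊆ M.E) (hT : T.encard = 3) (hTA : (T ∩ (A ∪ {x})).ncard = 2) : M.IsBase T := by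
  have hTfin := finite_of_encard_eq_coe hT
  obtain ⟨r, hrT, hrA⟩ : ∃ r ∈ T, r ∉ A ∪ {x} := by
    by_contra! h
    rw [inter_eq_self_of_subset_left h, ← Nat.cast_inj (R := ℕ∞), hTfin.cast_ncard_eq, hT] at hTA
    exact absurd hTA (by norm_num)
  have hrA' : r ∉ A := fun h ↦ hrA (Or.inl h)
  by_cases hxT : x ∈ T
  · obtain ⟨a, ⟨haT, haA⟩, hax⟩ := exists_ne_of_one_lt_ncard (hTA ▸ one_lt_two) x
    have haA : a ∈ A := haA.resolve_right hax
    refine isBase_of_notMem_closure_pair hsimple hrank hTE hT hax haT hxT hrT ?_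
    rw [hline a haA]
    rintro (rfl | rfl)
    exacts [hrA' haA, hrA (Or.inr rfl)]
  · obtain ⟨a, b, ⟨haT, haA⟩, ⟨hbT, hbA⟩, hab⟩ :=
      (one_lt_ncard_iff (hTfin.inter_of_left _)).1 (hTA ▸ one_lt_two)
    have hsub : ({a, b} : Set α) ⊆ A := pair_subset
      (haA.resolve_right fun h ↦ hxT (h ▸ haT)) (hbA.resolve_right fun h ↦ hxT (h ▸ hbT))
    exact isBase_of_notMem_closure_pair hsimple hrank hTE hT hab haT hbT hrT
      fun h ↦ hrA' (hA ▸ M.closure_subset_closure hsub h)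

lemma exists_isBase_two_lt_ncard_inter (hrank : M.eRank = 3) (hA : M.closure A = A)
    (hA2 : 2 ≤ M.eRk A) (hxE : x ∈ M.E) (hxA : x ∉ A) :
    ∃ B, M.IsBase B ∧ 2 < (B ∩ (A ∪ {x})).ncard := by
  obtain ⟨I, hIA, hI, hI2⟩ := le_eRk_iff.1 hA2
  have hxI : x ∉ I := fun h ↦ hxA (hIA h)
  have hB := isBase_of_indep_of_encard_eq
    ((hI.insert_indep_iff_of_notMem hxI).2 ⟨hxE, fun h ↦ hxA (hA ▸ M.closure_subset_closure hIA h)⟩)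
    (by rw [encard_insert_of_notMem hxI, hI2, hrank]; rfl)
  refine ⟨insert x I, hB, ?_⟩
  have hsub : insert x I ⊆ A ∪ {x} :=
    insert_subset (mem_union_right A rfl) (hIA.trans subset_union_left)
  rw [inter_eq_self_of_subset_left hsub, ncard_eq_three_of_isBase hrank hB]
  norm_num

lemma exists_isBase_ncard_inter_lt_two (hsimple : IsSimple M) (hrank : M.eRank = 3)
    (hS : 1 < (M.E \ S).ncard) : ∃ B, M.IsBase B ∧ (B ∩ S).ncard < 2 := by
  obtain ⟨y, z, hy, hz, hyz⟩ := (one_lt_ncard_iff (finite_of_ncard_pos (by omega))).1 hS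
  obtain ⟨B, hB, hyzB⟩ := (hsimple.indep_pair hy.1 hz.1).exists_isBase_superset
  refine ⟨B, hB, ?_⟩
  have hsub : B ∩ S ⊆ B \ {y, z} := by
    rintro w ⟨hwB, hwS⟩
    refine ⟨hwB, ?_⟩
    rintro (rfl | rfl)
    exacts [hy.2 hwS, hz.2 hwS]
  calc (B ∩ S).ncard ≤ (B \ {y, z}).ncard := ncard_le_ncard hsub hB.finite.sdiff
    _ < 2 := by rw [ncard_sdiff hyzB, ncard_eq_three_of_isBase hrank hB, ncard_pair hyz]; norm_num

end RankThree

theorem twoDecomposable_of_flat_and_point_general (M : Matroid α) (hfin : M.E.Finite)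
    (hsimple : IsSimple M) (hrank : rk M M.E = 3)
    (A : Set α) (hflat : IsFlat M A) (hrA : rk M A = 2)
    (hcompl : 3 ≤ (M.E \ A).ncard)
    (x : α) (hxE : x ∈ M.E) (hxA : x ∉ A)
    (hx : ∀ F : Set α, FacetFlat2 M F → (F ∩ A).Nonempty → x ∉ F) :
    TwoDecomposableBy M (A ∪ {x}) 2 := by
  have : M.Finite := ⟨hfin⟩
  have heRank : M.eRank = 3 := by rw [← eRk_ground, ← cast_rk_eq_eRk, hrank]; rfl
  have hA : M.closure A = A := (isFlat_iff_isFlat.1 hflat).closure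
  have hbase : ∀ T ⊆ M.E, T.encard = M.eRank → (T ∩ (A ∪ {x})).ncard = 2 → M.IsBase T :=
    fun T hTE hT ↦ isBase_of_ncard_inter_eq_two hsimple heRank hA hxA
      (fun a haA ↦ closure_pair_eq_self hsimple heRank haA (hflat.1 haA) hxE hxA hx) hTE
      (hT.trans heRank)
  obtain ⟨B₁, hB₁, hB₁A⟩ := exists_isBase_two_lt_ncard_inter heRank hA
    (by rw [← cast_rk_eq_eRk, hrA]; rfl) hxE hxA
  obtain ⟨B₂, hB₂, hB₂A⟩ := exists_isBase_ncard_inter_lt_two (S := A ∪ {x}) hsimple heRank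
    (by rw [← sdiff_sdiff, ncard_sdiff_singleton_of_mem (show x ∈ M.E \ A from ⟨hxE, hxA⟩)]; omega)
  exact ⟨exists_matroid_isBase_iff_ncard_inter_le hbase ⟨B₂, hB₂, hB₂A.le⟩,
    exists_matroid_isBase_iff_le_ncard_inter hbase ⟨B₁, hB₁, hB₁A.le⟩,
    ⟨B₁, hB₁, hB₁A⟩, ⟨B₂, hB₂, hB₂A⟩⟩

/-- If `A` is a rank-2 flat, `|E \ A| ≥ 3`, and `x ∉ A` belongs to no facet-defining flat
of rank 2 meeting `A`, then `M` is 2-decomposable by `(A ∪ {x}, 2)_=`. -/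
theorem twoDecomposable_of_flat_and_point (M : Matroid α) (hfin : M.E.Finite)
    (hconn : Conn M) (hsimple : IsSimple M) (hrank : rk M M.E = 3)
    (A : Set α) (hflat : IsFlat M A) (hrA : rk M A = 2)
    (hcompl : 3 ≤ (M.E \ A).ncard)
    (x : α) (hxE : x ∈ M.E) (hxA : x ∉ A)
    (hx : ∀ F : Set α, FacetFlat2 M F → (F ∩ A).Nonempty → x ∉ F) :
    TwoDecomposableBy M (A ∪ {x}) 2 :=
  twoDecomposable_of_flat_and_point_general M hfin hsimple hrank A hflat hrA hcompl x hxE hxA hx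

end PaperWMO
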